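/- arXiv:2512.18700 — 3 statements merged into one kernel-verified Lean document; each statement's English description precedes it below -/
import Mathlib

section
/- Let α, p, C₁, C₂ be real constants with α ≠ 1, and define v(θ) = C₁ · (cos(θ + C₂))^(1-α) and f(θ) = C₁ · (cos(θ + C₂))^(-α) · sin(θ + C₂) on an interval where cos(θ + C₂) > 0. Then (v, f) with p = 0 satisfies the homogeneous Euler ODE system: (1-α)·f(θ) + v'(θ) = 0 and v(θ)·f'(θ) = α·f(θ)² + v(θ)² + 2αp. -/
/-!
With `c = cos (θ + C₂)`, `s = sin (θ + C₂)` and `t = c ^ (-α)` one has `v = C₁ c t`, `f = C₁ t s`,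
`v' = -(1 - α) C₁ t s` and `f' = C₁ (t / c) (α s² + c²)`. The first equation is then immediate,
and both sides of the second equal `C₁² t² (α s² + c²)`.
-/

open Real

theorem Real.hasDerivAt_cos_add_rpow {c s x : ℝ} (hx : cos (x + c) ≠ 0) :
    HasDerivAt (fun y => cos (y + c) ^ s) (-s * cos (x + c) ^ (s - 1) * sin (x + c)) x := by
  refine (((hasDerivAt_id x).add_const c).cos.rpow_const (p := s) (Or.inl hx)).congr_deriv ?_
  simp only [id]
  ring

theorem Real.hasDerivAt_const_mul_cos_add_rpow_one_sub {C c α x : ℝ} (hx : cos (x + c) ≠ 0) :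
    HasDerivAt (fun y => C * cos (y + c) ^ (1 - α))
      (-(1 - α) * (C * cos (x + c) ^ (-α) * sin (x + c))) x := by
  refine ((hasDerivAt_cos_add_rpow (s := 1 - α) hx).const_mul C).congr_deriv ?_
  rw [sub_sub_cancel_left]
  ring

theorem Real.hasDerivAt_const_mul_cos_add_rpow_neg_mul_sin {C c α x : ℝ} (hx : cos (x + c) ≠ 0) :
    HasDerivAt (fun y => C * cos (y + c) ^ (-α) * sin (y + c))
      (C * cos (x + c) ^ (-α - 1) * (α * sin (x + c) ^ 2 + cos (x + c) ^ 2)) x := by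
  have hsin : HasDerivAt (fun y => sin (y + c)) (cos (x + c)) x := by
    simpa using ((hasDerivAt_id x).add_const c).sin
  refine (((hasDerivAt_cos_add_rpow (s := -α) hx).const_mul C).mul hsin).congr_deriv ?_
  rw [rpow_sub_one hx]
  field_simp

theorem homogeneous_euler_ode_p_zero_general
    (α p C₁ C₂ : ℝ) (hp : p = 0)
    (v f : ℝ → ℝ)
    (hv : ∀ θ, v θ = C₁ * (Real.cos (θ + C₂)) ^ (1 - α))
    (hf : ∀ θ, f θ = C₁ * (Real.cos (θ + C₂)) ^ (-α) * Real.sin (θ + C₂)) :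
    ∀ θ, 0 < Real.cos (θ + C₂) →
      (1 - α) * f θ + deriv v θ = 0 ∧
      v θ * deriv f θ = α * (f θ) ^ 2 + (v θ) ^ 2 + 2 * α * p := by
  intro θ hcos
  have hv' : deriv v θ = -(1 - α) * f θ := by
    rw [funext hv, hf, (hasDerivAt_const_mul_cos_add_rpow_one_sub hcos.ne').deriv]
  have hf' := (hasDerivAt_const_mul_cos_add_rpow_neg_mul_sin (C := C₁) (α := α) hcos.ne').deriv
  rw [← funext hf] at hf'
  refine ⟨by rw [hv']; ring, ?_⟩
  rw [hf', hv, hf, hp, rpow_sub_one hcos.ne',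
    show (1 : ℝ) - α = -α + 1 by ring, rpow_add_one hcos.ne']
  field_simp
  ring

theorem homogeneous_euler_ode_p_zero
    (α p C₁ C₂ : ℝ) (hα : α ≠ 1) (hp : p = 0)
    (v f : ℝ → ℝ)
    (hv : ∀ θ, v θ = C₁ * (Real.cos (θ + C₂)) ^ (1 - α))
    (hf : ∀ θ, f θ = C₁ * (Real.cos (θ + C₂)) ^ (-α) * Real.sin (θ + C₂)) :
    ∀ θ, 0 < Real.cos (θ + C₂) →
      (1 - α) * f θ + deriv v θ = 0 ∧
      v θ * deriv f θ = α * (f θ) ^ 2 + (v θ) ^ 2 + 2 * α * p :=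
  homogeneous_euler_ode_p_zero_general α p C₁ C₂ hp v f hv hf
end

section
/- Let c ≠ 0 and p be real constants, and suppose f : ℝ → ℝ is a C¹, 2π-periodic function (f(0) = f(2π) with f periodic) that never vanishes and satisfies c·f'(θ) = f(θ)² + c² + 2p for all θ. Then f is a nonzero constant d, and p = -(c² + d²)/2. -/
/-! At a maximum point `θ₀` of the periodic function `f` we have `f' θ₀ = 0`, so the ODE gives
`f θ₀ ^ 2 + c ^ 2 + 2 p = 0`. Hence `d := f θ₀` is an equilibrium of the autonomous equation
`f' = (f ^ 2 + c ^ 2 + 2 p) / c`, whose right-hand side is locally Lipschitz, and uniqueness of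
solutions through `θ₀` forces `f ≡ d`. -/

open Real Function Set

theorem Function.Periodic.exists_deriv_eq_zero {f : ℝ → ℝ} {T : ℝ} (hp : Periodic f T)
    (hT : T ≠ 0) (hf : Continuous f) : ∃ t, deriv f t = 0 := by
  obtain ⟨_, ⟨t, rfl⟩, hmax⟩ :=
    (hp.compact_of_continuous hT hf).exists_isGreatest (range_nonempty f)
  exact ⟨t, IsLocalMax.deriv_eq_zero (Filter.Eventually.of_forall fun s ↦ hmax ⟨s, rfl⟩)⟩

theorem ODE_solution_eq_of_equilibrium {E : Type*} [NormedAddCommGroup E] [NormedSpace ℝ E]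
    {v : E → E} (hv : LocallyLipschitz v) {f : ℝ → E} (hf : ∀ t, HasDerivAt f (v (f t)) t)
    {x₀ : E} (hx₀ : v x₀ = 0) {t₀ : ℝ} (ht₀ : f t₀ = x₀) (t : ℝ) : f t = x₀ := by
  obtain ⟨a, b, ht, ht₀'⟩ : ∃ a b, t ∈ Ioo a b ∧ t₀ ∈ Ioo a b :=
    ⟨min t t₀ - 1, max t t₀ + 1, by constructor <;> constructor <;> grind⟩
  set s := f '' Icc a b
  have hs : IsCompact s :=
    isCompact_Icc.image_of_continuousOn (HasDerivAt.continuousOn fun t _ ↦ hf t)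
  obtain ⟨K, hK⟩ := (hv.locallyLipschitzOn (s := s)).exists_lipschitzOnWith_of_compact hs
  have hmem : ∀ t ∈ Ioo a b, f t ∈ s := fun t ht ↦ mem_image_of_mem f (Ioo_subset_Icc_self ht)
  exact ODE_solution_unique_of_mem_Ioo (v := fun _ ↦ v) (s := fun _ ↦ s) (g := fun _ ↦ x₀)
    (fun _ _ ↦ hK) ht₀' (fun t ht ↦ ⟨hf t, hmem t ht⟩)
    (fun t _ ↦ ⟨hx₀ ▸ hasDerivAt_const t x₀, ht₀ ▸ hmem t₀ ht₀'⟩) ht₀ ht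

theorem periodic_riccati_constant
    (c p : ℝ) (hc : c ≠ 0)
    (f : ℝ → ℝ) (hf : ContDiff ℝ 1 f)
    (hper : ∀ θ, f (θ + 2 * π) = f θ)
    (hne : ∀ θ, f θ ≠ 0)
    (hode : ∀ θ, c * deriv f θ = (f θ) ^ 2 + c ^ 2 + 2 * p) :
    ∃ d : ℝ, d ≠ 0 ∧ (∀ θ, f θ = d) ∧ p = -(c ^ 2 + d ^ 2) / 2 := by
  obtain ⟨θ₀, hθ₀⟩ := Periodic.exists_deriv_eq_zero hper two_pi_pos.ne' hf.continuous
  set v : ℝ → ℝ := fun x ↦ (x ^ 2 + c ^ 2 + 2 * p) / c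
  have hv : LocallyLipschitz v := ContDiff.locallyLipschitz (by fun_prop)
  have hfv : ∀ θ, HasDerivAt f (v (f θ)) θ := fun θ ↦ by
    have hderiv : v (f θ) = deriv f θ := by simp only [v, ← hode θ, mul_div_cancel_left₀ _ hc]
    exact hderiv ▸ (hf.differentiable one_ne_zero θ).hasDerivAt
  have hzero : f θ₀ ^ 2 + c ^ 2 + 2 * p = 0 := by simpa [hθ₀] using (hode θ₀).symm
  have hequil : v (f θ₀) = 0 := by simp [v, hzero]
  refine ⟨f θ₀, hne θ₀, ODE_solution_eq_of_equilibrium hv hfv hequil rfl, ?_⟩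
  linarith
end

section
/- Let c ≠ 0 and v : [0,θ₀] → ℝ be a constant function v ≡ c, let f ∈ C¹([0,θ₀]) satisfy c·f' = f² + c² + 2p for a constant p, and define in polar coordinates u = (c/r)e_θ + (f(θ)/r)e_r, P = p/r² on a sector {a < r < b, 0 < θ < θ₀}. Then (u, P) satisfies the stationary incompressible Euler equations u·∇u = -∇P and div u = 0. -/
/-! Every term of the two momentum equations has the form `g(θ) / r³`. Multiplied by `r³`, the
angular equation cancels identically and the radial one becomes `c f' - f² - c² - 2p = 0`, which
is the ODE. Incompressibility holds because `r u_r = f(θ)` does not depend on `r` and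
`u_θ = c / r` does not depend on `θ`. -/

theorem deriv_const_div_sq (p : ℝ) {r : ℝ} (hr : r ≠ 0) :
    deriv (fun s => p / s ^ 2) r = -2 * p / r ^ 3 := by
  rw [deriv_const_div p (differentiableAt_pow 2) (pow_ne_zero 2 hr), deriv_pow_field]
  field_simp
  ring

theorem deriv_mul_const_div_self (k : ℝ) {r : ℝ} (hr : r ≠ 0) :
    deriv (fun s => s * (k / s)) r = 0 := by
  have h : (fun s : ℝ => s * (k / s)) =ᶠ[nhds r] fun _ => k := by
    filter_upwards [eventually_ne_nhds hr] with s hs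
    field_simp
  rw [h.deriv_eq, deriv_const]

theorem minus_one_homogeneous_solves_euler_general
    (c p a b θ₀ : ℝ) (hab : 0 ≤ a ∧ a < b)
    (f : ℝ → ℝ)
    (hode : ∀ θ, c * deriv f θ = (f θ) ^ 2 + c ^ 2 + 2 * p)
    (ur uθ P : ℝ → ℝ → ℝ)
    (hur : ∀ r θ, ur r θ = f θ / r)
    (huθ : ∀ r θ, uθ r θ = c / r)
    (hP : ∀ r θ, P r θ = p / r ^ 2) :
    ∀ r θ : ℝ, a < r → r < b → 0 < θ → θ < θ₀ →
      -- radial momentum equation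
      (ur r θ * deriv (fun s => ur s θ) r
        + (uθ r θ / r) * deriv (fun t => ur r t) θ
        - (uθ r θ) ^ 2 / r + deriv (fun s => P s θ) r = 0) ∧
      -- angular momentum equation
      (ur r θ * deriv (fun s => uθ s θ) r
        + (uθ r θ / r) * deriv (fun t => uθ r t) θ
        + uθ r θ * ur r θ / r + (1 / r) * deriv (fun t => P r t) θ = 0) ∧
      -- incompressibility
      (deriv (fun s => s * ur s θ) r + deriv (fun t => uθ r t) θ = 0) := by
  intro r θ har _ _ _
  have hr : r ≠ 0 := (hab.1.trans_lt har).ne'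
  simp only [hur, huθ, hP, deriv_const_div_id, deriv_div_const, deriv_const,
    deriv_const_div_sq p hr, deriv_mul_const_div_self (f θ) hr]
  refine ⟨?radial, ?angular, ?incompressible⟩
  case radial =>
    field_simp
    linear_combination hode θ
  case angular =>
    field_simp
    ring
  case incompressible =>
    simp

theorem minus_one_homogeneous_solves_euler
    (c p a b θ₀ : ℝ) (hc : c ≠ 0) (hab : 0 ≤ a ∧ a < b) (hθ₀ : 0 < θ₀)
    (f : ℝ → ℝ) (hf : ContDiff ℝ 1 f)
    (hode : ∀ θ, c * deriv f θ = (f θ) ^ 2 + c ^ 2 + 2 * p)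
    (ur uθ P : ℝ → ℝ → ℝ)
    (hur : ∀ r θ, ur r θ = f θ / r)
    (huθ : ∀ r θ, uθ r θ = c / r)
    (hP : ∀ r θ, P r θ = p / r ^ 2) :
    ∀ r θ : ℝ, a < r → r < b → 0 < θ → θ < θ₀ →
      -- radial momentum equation
      (ur r θ * deriv (fun s => ur s θ) r
        + (uθ r θ / r) * deriv (fun t => ur r t) θ
        - (uθ r θ) ^ 2 / r + deriv (fun s => P s θ) r = 0) ∧
      -- angular momentum equation
      (ur r θ * deriv (fun s => uθ s θ) r
        + (uθ r θ / r) * deriv (fun t => uθ r t) θ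
        + uθ r θ * ur r θ / r + (1 / r) * deriv (fun t => P r t) θ = 0) ∧
      -- incompressibility
      (deriv (fun s => s * ur s θ) r + deriv (fun t => uθ r t) θ = 0) :=
  minus_one_homogeneous_solves_euler_general c p a b θ₀ hab f hode ur uθ P hur huθ hP
end
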